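/- arXiv:1612.07143 — 3 statements merged into one kernel-verified Lean document; each statement's English description precedes it below -/
import Mathlib

section
/- Let u : ℝⁿ → ℝ be measurable with ∬_{ℝ^{2n}_Ω} |u(x) − u(y)|² |x−y|^{-(n+2s)} dx dy < ∞, u|_Ω ∈ L²(Ω), ∫_Ω V u² < ∞, and u⁺ := max(u,0) ∈ X^s_0(Ω). Then u satisfies E_V(u) ≤ E_V(u + φ) for every nonnegative φ ∈ Y^s_0(Ω) (i.e. u is a superminimizer) if and only if u is a weak supersolution of L_K u + V u = f in Ω, i.e. (1/2)∬_{ℝ^{2n}_Ω} (u(x) − u(y))(φ(x) − φ(y)) K(x−y) dx dy + ∫_Ω V u φ ≥ ∫_Ω f φ for every nonnegative φ ∈ Y^s_0(Ω). -/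
open MeasureTheory Real Filter
open scoped ENNReal RealInnerProductSpace

noncomputable section

/-- Euclidean space ℝⁿ. -/
abbrev En (n : ℕ) := EuclideanSpace ℝ (Fin n)

/-- The squared Gagliardo seminorm `[u]_s²`. -/
def gagliardoSq (n : ℕ) (s : ℝ) (u : En n → ℝ) : ℝ≥0∞ :=
  ∫⁻ p : En n × En n,
    ENNReal.ofReal ((u p.1 - u p.2) ^ 2 * ‖p.1 - p.2‖ ^ (-((n : ℝ) + 2 * s)))

/-- `K` is a symmetric measurable kernel comparable to `c⬝|y|^{-(n+2s)}`
with ellipticity constants `lam ≤ Lam`. -/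
def IsKernel (n : ℕ) (s lam Lam c : ℝ) (K : En n → ℝ) : Prop :=
  Measurable K ∧ (∀ y : En n, K (-y) = K y) ∧
    ∀ y : En n, y ≠ 0 →
      lam * c * ‖y‖ ^ (-((n : ℝ) + 2 * s)) ≤ K y ∧
        K y ≤ Lam * c * ‖y‖ ^ (-((n : ℝ) + 2 * s))

/-- The nonlocal operator `L_K` applied to a test function. -/
def LK (n : ℕ) (K φ : En n → ℝ) (x : En n) : ℝ :=
  (1 / 2) * ∫ y : En n, (2 * φ x - φ (x + y) - φ (x - y)) * K y

/-- `V ∈ L^q_loc(ℝⁿ)`. -/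
def LocLq (n : ℕ) (q : ℝ) (V : En n → ℝ) : Prop :=
  ∀ A : Set (En n), IsCompact A → MemLp V (ENNReal.ofReal q) (volume.restrict A)

/-- The space `X^s_0(Ω)`: measurable functions vanishing a.e. outside `Ω`
with finite Gagliardo seminorm. -/
def Xs0 (n : ℕ) (s : ℝ) (Ω : Set (En n)) : Set (En n → ℝ) :=
  {u | Measurable u ∧ (∀ᵐ x : En n ∂volume, x ∉ Ω → u x = 0) ∧ gagliardoSq n s u < ⊤}

/-- `∫_Ω V u²`. -/
def VIntSq (n : ℕ) (V : En n → ℝ) (Ω : Set (En n)) (u : En n → ℝ) : ℝ≥0∞ :=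
  ∫⁻ x in Ω, ENNReal.ofReal (V x * u x ^ 2)

/-- The space `Y^s_0(Ω) = X^s_0(Ω) ∩ L²_V(Ω)`. -/
def Ys0 (n : ℕ) (s : ℝ) (Ω : Set (En n)) (V : En n → ℝ) : Set (En n → ℝ) :=
  {u | u ∈ Xs0 n s Ω ∧ VIntSq n V Ω u < ⊤}

/-- The squared `Y^s_0(Ω)` norm: `[u]_s² + ∫_Ω V u²`. -/
def YnormSq (n : ℕ) (s : ℝ) (Ω : Set (En n)) (V : En n → ℝ) (u : En n → ℝ) : ℝ≥0∞ :=
  gagliardoSq n s u + VIntSq n V Ω u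

/-- The kernel quadratic form `∬ (u(x)-u(y))² K(x-y) dx dy` (as an `ℝ≥0∞`-integral). -/
def kerSq (n : ℕ) (K : En n → ℝ) (u : En n → ℝ) : ℝ≥0∞ :=
  ∫⁻ p : En n × En n, ENNReal.ofReal ((u p.1 - u p.2) ^ 2 * K (p.1 - p.2))

/-- The bilinear form `(1/2)∬ (u(x)-u(y))(φ(x)-φ(y)) K(x-y) dx dy`. -/
def bilin (n : ℕ) (K : En n → ℝ) (u φ : En n → ℝ) : ℝ :=
  (1 / 2) * ∫ p : En n × En n, (u p.1 - u p.2) * (φ p.1 - φ p.2) * K (p.1 - p.2)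

/-- The energy functional `E_V`. -/
def energy (n : ℕ) (K V f : En n → ℝ) (Ω : Set (En n)) (v : En n → ℝ) : ℝ :=
  (1 / 2) * (kerSq n K v).toReal + (VIntSq n V Ω v).toReal - 2 * ∫ x in Ω, f x * v x

/-- The region `ℝ^{2n}_Ω = (ℝⁿ×ℝⁿ) \ (Ωᶜ×Ωᶜ)`. -/
def R2n (n : ℕ) (Ω : Set (En n)) : Set (En n × En n) := (Ωᶜ ×ˢ Ωᶜ)ᶜ

/-- The squared Gagliardo seminorm restricted to `ℝ^{2n}_Ω`. -/
def gagliardoSqOn (n : ℕ) (s : ℝ) (Ω : Set (En n)) (u : En n → ℝ) : ℝ≥0∞ :=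
  ∫⁻ p in R2n n Ω,
    ENNReal.ofReal ((u p.1 - u p.2) ^ 2 * ‖p.1 - p.2‖ ^ (-((n : ℝ) + 2 * s)))

/-- The kernel quadratic form restricted to `ℝ^{2n}_Ω`. -/
def kerSqOn (n : ℕ) (Ω : Set (En n)) (K : En n → ℝ) (u : En n → ℝ) : ℝ≥0∞ :=
  ∫⁻ p in R2n n Ω, ENNReal.ofReal ((u p.1 - u p.2) ^ 2 * K (p.1 - p.2))

/-- The bilinear form restricted to `ℝ^{2n}_Ω`. -/
def bilinOn (n : ℕ) (Ω : Set (En n)) (K : En n → ℝ) (u φ : En n → ℝ) : ℝ :=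
  (1 / 2) * ∫ p in R2n n Ω, (u p.1 - u p.2) * (φ p.1 - φ p.2) * K (p.1 - p.2)

/-- The energy functional `E_V` with the double integral over `ℝ^{2n}_Ω`. -/
def energyOn (n : ℕ) (Ω : Set (En n)) (K V f : En n → ℝ) (v : En n → ℝ) : ℝ :=
  (1 / 2) * (kerSqOn n Ω K v).toReal + (VIntSq n V Ω v).toReal - 2 * ∫ x in Ω, f x * v x

/-!
Expanding the quadratic energy at `u` in a direction `φ` gives
`E(u + εφ) = E(u) + 2ε (B(u, φ) + ∫_Ω V u φ - ∫_Ω f φ) + ε² (½ ∬ (φ(x) - φ(y))² K + ∫_Ω V φ²)`.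
If `u` is a superminimizer, the right-hand side is `≥ E(u)` for every `ε > 0` (the cone of
nonnegative test functions is stable under positive scaling), and letting `ε → 0` shows that the
linear coefficient is nonnegative. Conversely, a nonnegative linear coefficient and the
nonnegative quadratic term give `E(u + φ) ≥ E(u)`.

The expansion is legitimate because every term is finite: `K` is comparable to the fractional
kernel, and a test function in `X^s_0(Ω)` lies in `L²(Ω)`, since its Gagliardo seminorm dominates
`∫_Ω φ²` times the interaction of `Ω` with a ball far from `Ω`, on which `φ` vanishes.
-/

open Topology Bornology

section WeightedSquare

variable {α : Type*} [MeasurableSpace α] {μ : Measure α} {w a b : α → ℝ}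

theorem lintegral_ofReal_const_mul {c : ℝ} (hc : 0 ≤ c) (g : α → ℝ) :
    ∫⁻ x, ENNReal.ofReal (c * g x) ∂μ = ENNReal.ofReal c * ∫⁻ x, ENNReal.ofReal (g x) ∂μ := by
  simp_rw [ENNReal.ofReal_mul hc]
  exact lintegral_const_mul' _ _ ENNReal.ofReal_ne_top

theorem integrable_mul_mul_of_integrable_mul_sq (hw : 0 ≤ᵐ[μ] w)
    (hm : AEStronglyMeasurable (fun x => w x * a x * b x) μ)
    (ha : Integrable (fun x => w x * a x ^ 2) μ) (hb : Integrable (fun x => w x * b x ^ 2) μ) :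
    Integrable (fun x => w x * a x * b x) μ := by
  refine ((ha.add hb).const_mul (1 / 2)).mono' hm ?_
  filter_upwards [hw] with x (hx : 0 ≤ w x)
  rw [Pi.add_apply, Real.norm_eq_abs, abs_le]
  constructor <;>
    nlinarith [mul_nonneg hx (sq_nonneg (a x - b x)), mul_nonneg hx (sq_nonneg (a x + b x))]

theorem toReal_lintegral_mul_add_smul_sq (hw : Measurable w) (hw0 : 0 ≤ᵐ[μ] w)
    (ha : Measurable a) (hb : Measurable b)
    (ha2 : ∫⁻ x, ENNReal.ofReal (w x * a x ^ 2) ∂μ ≠ ∞)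
    (hb2 : ∫⁻ x, ENNReal.ofReal (w x * b x ^ 2) ∂μ ≠ ∞) (ε : ℝ) :
    (∫⁻ x, ENNReal.ofReal (w x * (a x + ε * b x) ^ 2) ∂μ).toReal =
      (∫⁻ x, ENNReal.ofReal (w x * a x ^ 2) ∂μ).toReal + 2 * ε * ∫ x, w x * a x * b x ∂μ +
        ε ^ 2 * (∫⁻ x, ENNReal.ofReal (w x * b x ^ 2) ∂μ).toReal := by
  have hsq (g : α → ℝ) : 0 ≤ᵐ[μ] fun x => w x * g x ^ 2 := by
    filter_upwards [hw0] with x hx using mul_nonneg hx (sq_nonneg _)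
  have htoReal {g : α → ℝ} (hg : Measurable g) :
      (∫⁻ x, ENNReal.ofReal (w x * g x ^ 2) ∂μ).toReal = ∫ x, w x * g x ^ 2 ∂μ :=
    (integral_eq_lintegral_of_nonneg_ae (hsq g)
      (hw.mul (hg.pow_const 2)).aestronglyMeasurable).symm
  have hintegrable {g : α → ℝ} (hg : Measurable g) (hg2 : ∫⁻ x, ENNReal.ofReal (w x * g x ^ 2) ∂μ ≠ ∞) :
      Integrable (fun x => w x * g x ^ 2) μ :=
    (lintegral_ofReal_ne_top_iff_integrable (hw.mul (hg.pow_const 2)).aestronglyMeasurable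
      (hsq g)).1 hg2
  have ha_int := hintegrable ha ha2
  have hb_int := hintegrable hb hb2
  have hab_int := integrable_mul_mul_of_integrable_mul_sq hw0
    ((hw.mul ha).mul hb).aestronglyMeasurable ha_int hb_int
  have hsum_int : Integrable (fun x => w x * a x ^ 2 + 2 * ε * (w x * a x * b x)) μ :=
    ha_int.add (hab_int.const_mul _)
  have hexpand : ∫ x, w x * (a x + ε * b x) ^ 2 ∂μ =
      ∫ x, (w x * a x ^ 2 + 2 * ε * (w x * a x * b x)) + ε ^ 2 * (w x * b x ^ 2) ∂μ := by
    congr 1; ext x; ring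
  rw [htoReal ha, htoReal hb, htoReal (g := fun x => a x + ε * b x) (ha.add (hb.const_mul ε)),
    hexpand, integral_add hsum_int (hb_int.const_mul _),
    integral_add ha_int (hab_int.const_mul _), integral_const_mul, integral_const_mul]

end WeightedSquare

theorem nonneg_of_forall_pos_mul_add_sq_mul_nonneg {T Q : ℝ}
    (h : ∀ ε > 0, 0 ≤ ε * T + ε ^ 2 * Q) : 0 ≤ T := by
  have hlin : ∀ ε > 0, 0 ≤ T + ε * Q := fun ε hε =>
    nonneg_of_mul_nonneg_right (by linear_combination h ε hε) hε
  have hlim : Tendsto (fun ε => T + ε * Q) (𝓝[>] 0) (𝓝 T) := by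
    have hcont : Continuous fun ε : ℝ => T + ε * Q := by fun_prop
    simpa using (hcont.tendsto 0).mono_left nhdsWithin_le_nhds
  exact ge_of_tendsto hlim (eventually_nhdsWithin_of_forall hlin)

theorem MeasureTheory.Measure.ae_prod_fst_ne_snd {α : Type*} [MeasurableSpace α] [MeasurableEq α]
    {μ ν : Measure α} [SFinite ν] [NullSingletonClass ν] : ∀ᵐ p ∂μ.prod ν, p.1 ≠ p.2 := by
  refine (Measure.ae_prod_iff_ae_ae (p := fun p : α × α => p.1 ≠ p.2)
    measurableSet_diagonal.compl).2 ?_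
  exact ae_of_all _ fun x => ae_iff.2 (by simp)

theorem Bornology.IsBounded.exists_ball_disjoint {E : Type*} [NormedAddCommGroup E]
    [NormedSpace ℝ E] [Nontrivial E] {Ω : Set E} (hΩ : IsBounded Ω) :
    ∃ x₀ : E, Disjoint (Metric.ball x₀ 1) Ω := by
  obtain ⟨R, hR, hΩR⟩ := hΩ.exists_pos_norm_le
  obtain ⟨x₀, hx₀⟩ := exists_norm_eq E (show 0 ≤ R + 1 by linarith)
  refine ⟨x₀, Set.disjoint_left.2 fun y hy hyΩ => ?_⟩
  have hdist : ‖x₀ - y‖ < 1 := by rwa [← dist_eq_norm, ← Metric.mem_ball']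
  linarith [hΩR y hyΩ, norm_sub_norm_le x₀ y]

section Gagliardo

variable {n : ℕ} {s : ℝ} {Ω : Set (En n)} {V φ : En n → ℝ}

theorem ofReal_mul_volume_mul_lintegral_sq_le_gagliardoSq {A : Set (En n)} {κ : ℝ}
    (hΩ : MeasurableSet Ω) (hA : MeasurableSet A) (hAΩ : Disjoint A Ω)
    (hκ : ∀ x ∈ Ω, ∀ y ∈ A, κ ≤ ‖x - y‖ ^ (-((n : ℝ) + 2 * s)))
    (hφ : Measurable φ) (hφ0 : ∀ᵐ x : En n, x ∉ Ω → φ x = 0) :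
    ENNReal.ofReal κ * volume A * ∫⁻ x in Ω, ENNReal.ofReal (φ x ^ 2) ≤ gagliardoSq n s φ := by
  have hprod : ∫⁻ p in Ω ×ˢ A, ENNReal.ofReal (φ p.1 ^ 2) =
      volume A * ∫⁻ x in Ω, ENNReal.ofReal (φ x ^ 2) := by
    rw [Measure.volume_eq_prod, ← Measure.prod_restrict, lintegral_prod
      (fun p : En n × En n => ENNReal.ofReal (φ p.1 ^ 2)) (by fun_prop)]
    simp only [lintegral_const, Measure.restrict_apply_univ]
    rw [lintegral_mul_const _ (by fun_prop), mul_comm]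
  have hφ0' : ∀ᵐ p : En n × En n, p.2 ∉ Ω → φ p.2 = 0 :=
    Measure.volume_eq_prod (α := En n) (β := En n) ▸ Measure.quasiMeasurePreserving_snd.ae hφ0
  have hbound : ∀ᵐ p ∂volume.restrict (Ω ×ˢ A),
      ENNReal.ofReal κ * ENNReal.ofReal (φ p.1 ^ 2) ≤
        ENNReal.ofReal ((φ p.1 - φ p.2) ^ 2 * ‖p.1 - p.2‖ ^ (-((n : ℝ) + 2 * s))) := by
    filter_upwards [ae_restrict_mem (hΩ.prod hA), ae_restrict_of_ae hφ0'] with p ⟨hp1, hp2⟩ hp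
    rw [hp (hAΩ.notMem_of_mem_left hp2), sub_zero, ← ENNReal.ofReal_mul' (sq_nonneg _)]
    exact ENNReal.ofReal_le_ofReal
      (by nlinarith [mul_le_mul_of_nonneg_left (hκ _ hp1 _ hp2) (sq_nonneg (φ p.1))])
  calc ENNReal.ofReal κ * volume A * ∫⁻ x in Ω, ENNReal.ofReal (φ x ^ 2)
      = ∫⁻ p in Ω ×ˢ A, ENNReal.ofReal κ * ENNReal.ofReal (φ p.1 ^ 2) := by
        rw [lintegral_const_mul' _ _ ENNReal.ofReal_ne_top, hprod, mul_assoc]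
    _ ≤ _ := lintegral_mono_ae hbound
    _ ≤ gagliardoSq n s φ := setLIntegral_le_lintegral _ _

theorem memLp_two_restrict_of_mem_Xs0 [Nontrivial (En n)] (hs : 0 ≤ s)
    (hΩ : MeasurableSet Ω) (hΩb : IsBounded Ω) (hφ : φ ∈ Xs0 n s Ω) :
    MemLp φ 2 (volume.restrict Ω) := by
  obtain ⟨hφm, hφ0, hφg⟩ := hφ
  obtain ⟨x₀, hdisj⟩ := hΩb.exists_ball_disjoint
  obtain ⟨R, hR, hR'⟩ := (hΩb.union (Metric.isBounded_ball (x := x₀) (r := 1))).exists_pos_norm_le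
  have hκ : ∀ x ∈ Ω, ∀ y ∈ Metric.ball x₀ 1,
      (2 * R) ^ (-((n : ℝ) + 2 * s)) ≤ ‖x - y‖ ^ (-((n : ℝ) + 2 * s)) := fun x hx y hy =>
    Real.rpow_le_rpow_of_nonpos
      (norm_pos_iff.2 <| sub_ne_zero.2 (ne_of_mem_of_not_mem hx (hdisj.notMem_of_mem_left hy)))
      (by linarith [norm_sub_le x y, hR' x (.inl hx), hR' y (.inr hy)])
      (by rw [neg_nonpos]; positivity)
  have hbound := ofReal_mul_volume_mul_lintegral_sq_le_gagliardoSq hΩ measurableSet_ball hdisj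
    hκ hφm hφ0
  have hc : ENNReal.ofReal ((2 * R) ^ (-((n : ℝ) + 2 * s))) * volume (Metric.ball x₀ 1) ≠ 0 :=
    mul_ne_zero (by simp; positivity) (Metric.measure_ball_pos _ _ one_pos).ne'
  have hfin : ∫⁻ x in Ω, ENNReal.ofReal (φ x ^ 2) ≠ ∞ := fun htop => by
    rw [htop, ENNReal.mul_top hc] at hbound
    exact hφg.ne (top_le_iff.1 hbound)
  exact (memLp_two_iff_integrable_sq hφm.aestronglyMeasurable).2
    ((lintegral_ofReal_ne_top_iff_integrable (hφm.pow_const 2).aestronglyMeasurable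
      (ae_of_all _ fun x => sq_nonneg _)).1 hfin)

theorem gagliardoSq_const_mul (c : ℝ) (φ : En n → ℝ) :
    gagliardoSq n s (fun x => c * φ x) = ENNReal.ofReal (c ^ 2) * gagliardoSq n s φ := by
  rw [gagliardoSq, gagliardoSq, ← lintegral_ofReal_const_mul (sq_nonneg c)]
  congr 1; ext p; congr 1; ring

theorem VIntSq_const_mul (c : ℝ) (φ : En n → ℝ) :
    VIntSq n V Ω (fun x => c * φ x) = ENNReal.ofReal (c ^ 2) * VIntSq n V Ω φ := by
  rw [VIntSq, VIntSq, ← lintegral_ofReal_const_mul (sq_nonneg c)]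
  congr 1; ext x; congr 1; ring

theorem const_mul_mem_Ys0 (c : ℝ) (hφ : φ ∈ Ys0 n s Ω V) : (fun x => c * φ x) ∈ Ys0 n s Ω V := by
  obtain ⟨⟨hφm, hφ0, hφg⟩, hφV⟩ := hφ
  refine ⟨⟨hφm.const_mul c, ?_, ?_⟩, ?_⟩
  · filter_upwards [hφ0] with x hx hxΩ
    rw [hx hxΩ, mul_zero]
  · rw [gagliardoSq_const_mul]
    exact ENNReal.mul_lt_top ENNReal.ofReal_lt_top hφg
  · rw [VIntSq_const_mul]
    exact ENNReal.mul_lt_top ENNReal.ofReal_lt_top hφV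

end Gagliardo

section Energy

variable {n : ℕ} {s lam Lam c : ℝ} {K V f : En n → ℝ} {Ω : Set (En n)} {u φ : En n → ℝ}

theorem IsKernel.nonneg (hK : IsKernel n s lam Lam c K) (hlc : 0 ≤ lam * c) {y : En n}
    (hy : y ≠ 0) : 0 ≤ K y :=
  (mul_nonneg hlc (Real.rpow_nonneg (norm_nonneg y) _)).trans (hK.2.2 y hy).1

theorem IsKernel.ae_nonneg_sub [Nontrivial (En n)] (hK : IsKernel n s lam Lam c K)
    (hlc : 0 ≤ lam * c) : ∀ᵐ p : En n × En n, 0 ≤ K (p.1 - p.2) := by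
  rw [Measure.volume_eq_prod]
  filter_upwards [Measure.ae_prod_fst_ne_snd] with p hp using hK.nonneg hlc (sub_ne_zero.2 hp)

theorem kerSqOn_le_ofReal_mul_gagliardoSqOn (hK : IsKernel n s lam Lam c K) (v : En n → ℝ) :
    kerSqOn n Ω K v ≤ ENNReal.ofReal (Lam * c) * gagliardoSqOn n s Ω v := by
  rw [kerSqOn, gagliardoSqOn, ← lintegral_const_mul' _ _ ENNReal.ofReal_ne_top]
  refine lintegral_mono fun p => ?_
  rcases eq_or_ne p.1 p.2 with h | h
  · simp [h]
  · rw [← ENNReal.ofReal_mul' (by positivity)]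
    have hKle := mul_le_mul_of_nonneg_left (hK.2.2 _ (sub_ne_zero.2 h)).2
      (sq_nonneg (v p.1 - v p.2))
    exact ENNReal.ofReal_le_ofReal (by linarith)

theorem toReal_kerSqOn_add_smul [Nontrivial (En n)] (hK : IsKernel n s lam Lam c K)
    (hlc : 0 ≤ lam * c) (hu : Measurable u) (hφ : Measurable φ)
    (hu_K : kerSqOn n Ω K u ≠ ∞) (hφ_K : kerSqOn n Ω K φ ≠ ∞) (ε : ℝ) :
    (kerSqOn n Ω K (fun x => u x + ε * φ x)).toReal =
      (kerSqOn n Ω K u).toReal + 4 * ε * bilinOn n Ω K u φ +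
        ε ^ 2 * (kerSqOn n Ω K φ).toReal := by
  have hswap (v : En n → ℝ) : kerSqOn n Ω K v =
      ∫⁻ p in R2n n Ω, ENNReal.ofReal (K (p.1 - p.2) * (v p.1 - v p.2) ^ 2) := by
    simp only [kerSqOn, mul_comm]
  have hdiff {v : En n → ℝ} (hv : Measurable v) : Measurable fun p : En n × En n => v p.1 - v p.2 :=
    (hv.comp measurable_fst).sub (hv.comp measurable_snd)
  have hsum : kerSqOn n Ω K (fun x => u x + ε * φ x) = ∫⁻ p in R2n n Ω,
      ENNReal.ofReal (K (p.1 - p.2) * ((u p.1 - u p.2) + ε * (φ p.1 - φ p.2)) ^ 2) := by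
    rw [kerSqOn]; congr 1; ext p; congr 1; ring
  have hbil : bilinOn n Ω K u φ =
      (1 / 2) * ∫ p in R2n n Ω, K (p.1 - p.2) * (u p.1 - u p.2) * (φ p.1 - φ p.2) := by
    rw [bilinOn]; congr 2; ext p; ring
  rw [hsum, hswap u, hswap φ, hbil, toReal_lintegral_mul_add_smul_sq
    (w := fun p : En n × En n => K (p.1 - p.2)) (a := fun p => u p.1 - u p.2)
    (b := fun p => φ p.1 - φ p.2) (hK.1.comp (measurable_fst.sub measurable_snd))
    (ae_restrict_of_ae (hK.ae_nonneg_sub hlc)) (hdiff hu) (hdiff hφ) (hswap u ▸ hu_K)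
    (hswap φ ▸ hφ_K) ε]
  ring

theorem integral_mul_add_smul (hf : MemLp f 2 (volume.restrict Ω))
    (hu : MemLp u 2 (volume.restrict Ω)) (hφ : MemLp φ 2 (volume.restrict Ω)) (ε : ℝ) :
    ∫ x in Ω, f x * (u x + ε * φ x) = (∫ x in Ω, f x * u x) + ε * ∫ x in Ω, f x * φ x := by
  have hfu : Integrable (fun x => f x * u x) (volume.restrict Ω) := hf.integrable_mul hu
  have hfφ : Integrable (fun x => ε * (f x * φ x)) (volume.restrict Ω) :=
    (hf.integrable_mul hφ).const_mul ε
  simp_rw [mul_add, mul_left_comm (f _) ε]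
  rw [integral_add hfu hfφ, integral_const_mul]

theorem energyOn_add_smul [Nontrivial (En n)] (hK : IsKernel n s lam Lam c K)
    (hlc : 0 ≤ lam * c) (hV : Measurable V) (hV0 : ∀ x, 0 ≤ V x)
    (hf : MemLp f 2 (volume.restrict Ω))
    (hu : Measurable u) (hu_K : kerSqOn n Ω K u ≠ ∞) (hu_V : VIntSq n V Ω u ≠ ∞)
    (hu_L2 : MemLp u 2 (volume.restrict Ω))
    (hφ : Measurable φ) (hφ_K : kerSqOn n Ω K φ ≠ ∞) (hφ_V : VIntSq n V Ω φ ≠ ∞)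
    (hφ_L2 : MemLp φ 2 (volume.restrict Ω)) (ε : ℝ) :
    energyOn n Ω K V f (fun x => u x + ε * φ x) =
      energyOn n Ω K V f u +
        (ε * (2 * (bilinOn n Ω K u φ + (∫ x in Ω, V x * u x * φ x) - ∫ x in Ω, f x * φ x)) +
          ε ^ 2 * ((1 / 2) * (kerSqOn n Ω K φ).toReal + (VIntSq n V Ω φ).toReal)) := by
  have hVsq : (VIntSq n V Ω (fun x => u x + ε * φ x)).toReal =
      (VIntSq n V Ω u).toReal + 2 * ε * (∫ x in Ω, V x * u x * φ x) +
        ε ^ 2 * (VIntSq n V Ω φ).toReal := by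
    rw [VIntSq, VIntSq, VIntSq]
    exact toReal_lintegral_mul_add_smul_sq hV (ae_of_all _ hV0) hu hφ hu_V hφ_V ε
  rw [energyOn, energyOn, toReal_kerSqOn_add_smul hK hlc hu hφ hu_K hφ_K, hVsq,
    integral_mul_add_smul hf hu_L2 hφ_L2]
  ring

end Energy

/-- `u` is a superminimizer of the energy (over `ℝ^{2n}_Ω`) iff
`u` is a weak supersolution of `L_K u + V u = f` in `Ω`. -/
theorem stmt4 (n : ℕ) (hn : 2 ≤ n) (s : ℝ) (hs0 : 0 < s)
    (c lam Lam : ℝ) (hlam : 0 < lam) (hc : 0 < c)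
    (K : En n → ℝ) (hK : IsKernel n s lam Lam c K)
    (V : En n → ℝ) (hVmeas : Measurable V) (hV0 : ∀ x, 0 ≤ V x)
    (Ω : Set (En n)) (hΩo : IsOpen Ω) (hΩb : Bornology.IsBounded Ω)
    (f : En n → ℝ) (hf : MemLp f 2 (volume.restrict Ω))
    (u : En n → ℝ) (hu_meas : Measurable u)
    (hu_g : gagliardoSqOn n s Ω u < ⊤)
    (hu_L2 : MemLp u 2 (volume.restrict Ω))
    (hu_V : VIntSq n V Ω u < ⊤) :
    (∀ φ ∈ Ys0 n s Ω V, (∀ x, 0 ≤ φ x) →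
        energyOn n Ω K V f u ≤ energyOn n Ω K V f (fun x => u x + φ x)) ↔
      (∀ φ ∈ Ys0 n s Ω V, (∀ x, 0 ≤ φ x) →
        ∫ x in Ω, f x * φ x ≤ bilinOn n Ω K u φ + ∫ x in Ω, V x * u x * φ x) := by
  have : Nonempty (Fin n) := ⟨⟨0, by omega⟩⟩ -- hence `Nontrivial (En n)`
  have hlc : 0 ≤ lam * c := (mul_pos hlam hc).le
  have hK_fin {v : En n → ℝ} (hv : gagliardoSqOn n s Ω v < ⊤) : kerSqOn n Ω K v ≠ ∞ :=
    ((kerSqOn_le_ofReal_mul_gagliardoSqOn hK v).trans_lt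
      (ENNReal.mul_lt_top ENNReal.ofReal_lt_top hv)).ne
  have expand {φ : En n → ℝ} (hφ : φ ∈ Ys0 n s Ω V) (ε : ℝ) :=
    energyOn_add_smul (f := f) hK hlc hVmeas hV0 hf hu_meas (hK_fin hu_g) hu_V.ne hu_L2 hφ.1.1
      (hK_fin ((setLIntegral_le_lintegral _ _).trans_lt hφ.1.2.2)) hφ.2.ne
      (memLp_two_restrict_of_mem_Xs0 hs0.le hΩo.measurableSet hΩb hφ.1) ε
  constructor
  · intro hmin φ hφ hφ0
    have hT := nonneg_of_forall_pos_mul_add_sq_mul_nonneg fun ε hε =>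
      (le_add_iff_nonneg_right _).1 <| expand hφ ε ▸
        hmin _ (const_mul_mem_Ys0 ε hφ) fun x => mul_nonneg hε.le (hφ0 x)
    linarith
  · intro hsol φ hφ hφ0
    have h := expand hφ 1
    simp only [one_mul, one_pow] at h
    rw [h]
    have hQ : 0 ≤ (1 / 2) * (kerSqOn n Ω K φ).toReal + (VIntSq n V Ω φ).toReal := by positivity
    linarith [hsol φ hφ hφ0]
end
end

section
/- If u is a weak subsolution of L_K u + V u = 0 in Ω and u ≤ 0 a.e. on ℝⁿ \ Ω, then u ≤ 0 a.e. on ℝⁿ. -/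
/-!
Test the subsolution inequality with `φ = u⁺`, which lies in `Y^s_0(Ω)` because `u ≤ 0` outside
`Ω`. Since `(a - b)(a⁺ - b⁺) ≥ (a⁺ - b⁺)² ≥ 0` and `V u u⁺ ≥ 0`, the inequality forces the
nonnegative integrand `(u(x) - u(y))(u⁺(x) - u⁺(y)) K(x - y)` to vanish a.e. on `ℝ^{2n}_Ω`, so
`u⁺(x) = u⁺(y)` for a.e. `x ∈ Ω`, `y ∉ Ω`. As `Ω` is bounded, `ℝⁿ \ Ω` has positive measure, and
`u⁺ = 0` there; hence `u⁺ = 0` a.e. on `Ω` as well.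
-/

open MeasureTheory Real Filter
open scoped ENNReal RealInnerProductSpace

noncomputable section

lemma sq_sub_max_zero_le_mul (a b : ℝ) :
    (max a 0 - max b 0) ^ 2 ≤ (a - b) * (max a 0 - max b 0) := by
  rcases le_total a 0 with ha | ha <;> rcases le_total b 0 with hb | hb <;>
    simp only [max_eq_left, max_eq_right, ha, hb] <;> nlinarith

lemma mul_sub_max_zero_le_sq (a b : ℝ) : (a - b) * (max a 0 - max b 0) ≤ (a - b) ^ 2 := by
  rcases le_total a 0 with ha | ha <;> rcases le_total b 0 with hb | hb <;>
    simp only [max_eq_left, max_eq_right, ha, hb] <;> nlinarith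

lemma sq_sub_max_zero_le_sq (a b : ℝ) : (max a 0 - max b 0) ^ 2 ≤ (a - b) ^ 2 :=
  (sq_sub_max_zero_le_mul a b).trans (mul_sub_max_zero_le_sq a b)

lemma mul_max_zero_nonneg (a : ℝ) : 0 ≤ a * max a 0 := by
  simpa using (sq_nonneg _).trans (sq_sub_max_zero_le_mul a 0)

lemma max_zero_eq_of_mul_sub_max_zero_eq_zero {a b : ℝ}
    (h : (a - b) * (max a 0 - max b 0) = 0) : max a 0 = max b 0 := by
  have := sq_sub_max_zero_le_mul a b
  rw [h] at this
  nlinarith [sq_nonneg (max a 0 - max b 0)]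

theorem ae_eq_of_ae_prod_eq {α β γ : Type*} [MeasurableSpace α] [MeasurableSpace β]
    {μ : Measure α} {ν : Measure β} [SFinite ν] [NeZero ν] {f : α → γ} {g : β → γ} {c : γ}
    (h : ∀ᵐ p ∂μ.prod ν, f p.1 = g p.2) (hg : ∀ᵐ y ∂ν, g y = c) : ∀ᵐ x ∂μ, f x = c := by
  filter_upwards [Measure.ae_ae_of_ae_prod h] with x hx
  obtain ⟨y, hxy, hy⟩ := (hx.and hg).exists
  exact hxy.trans hy

lemma measure_compl_ne_zero_of_isBounded {E : Type*} [NormedAddCommGroup E] [NormedSpace ℝ E]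
    [FiniteDimensional ℝ E] [Nontrivial E] [MeasurableSpace E] [BorelSpace E]
    (μ : Measure E) [μ.IsAddHaarMeasure] {s : Set E} (hs : Bornology.IsBounded s) :
    μ sᶜ ≠ 0 := by
  intro h
  have := measure_univ_le_add_compl (μ := μ) s
  rw [measure_univ_of_isAddLeftInvariant, h, add_zero, top_le_iff] at this
  exact hs.measure_lt_top.ne this

section

variable {n : ℕ} {s : ℝ} {Ω : Set (En n)}

lemma gagliardoSq_eq_gagliardoSqOn (hΩ : MeasurableSet Ω) {u : En n → ℝ}
    (hu : ∀ᵐ x, x ∉ Ω → u x = 0) : gagliardoSq n s u = gagliardoSqOn n s Ω u := by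
  have hout : ∀ᵐ x ∂volume.restrict Ωᶜ, u x = 0 := (ae_restrict_iff' hΩ.compl).2 hu
  have hzero : ∀ᵐ p ∂volume.restrict (Ωᶜ ×ˢ Ωᶜ),
      ENNReal.ofReal ((u p.1 - u p.2) ^ 2 * ‖p.1 - p.2‖ ^ (-((n : ℝ) + 2 * s))) = 0 := by
    rw [Measure.volume_eq_prod, ← Measure.prod_restrict]
    filter_upwards [Measure.quasiMeasurePreserving_fst.ae hout,
      Measure.quasiMeasurePreserving_snd.ae hout] with p h1 h2
    simp [h1, h2]
  rw [gagliardoSq, ← lintegral_add_compl _ (hΩ.compl.prod hΩ.compl), lintegral_congr_ae hzero,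
    lintegral_zero, zero_add, gagliardoSqOn, R2n]

lemma gagliardoSqOn_max_zero_le (u : En n → ℝ) :
    gagliardoSqOn n s Ω (fun x => max (u x) 0) ≤ gagliardoSqOn n s Ω u :=
  lintegral_mono fun _ => ENNReal.ofReal_le_ofReal <|
    mul_le_mul_of_nonneg_right (sq_sub_max_zero_le_sq _ _) (by positivity)

lemma VIntSq_max_zero_le {V : En n → ℝ} (hV : ∀ x, 0 ≤ V x) (u : En n → ℝ) :
    VIntSq n V Ω (fun x => max (u x) 0) ≤ VIntSq n V Ω u :=
  lintegral_mono fun x => ENNReal.ofReal_le_ofReal <|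
    mul_le_mul_of_nonneg_left (by simpa using sq_sub_max_zero_le_sq (u x) 0) (hV x)

lemma max_zero_mem_Ys0 (hΩ : MeasurableSet Ω) {V : En n → ℝ} (hV : ∀ x, 0 ≤ V x)
    {u : En n → ℝ} (hu : Measurable u) (hout : ∀ᵐ x, x ∉ Ω → u x ≤ 0)
    (hg : gagliardoSqOn n s Ω u < ⊤) (hVu : VIntSq n V Ω u < ⊤) :
    (fun x => max (u x) 0) ∈ Ys0 n s Ω V := by
  have hout' : ∀ᵐ x, x ∉ Ω → max (u x) 0 = 0 :=
    hout.mono fun x hx hxΩ => max_eq_right (hx hxΩ)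
  refine ⟨⟨hu.max measurable_const, hout', ?_⟩, (VIntSq_max_zero_le hV u).trans_lt hVu⟩
  rw [gagliardoSq_eq_gagliardoSqOn hΩ hout']
  exact (gagliardoSqOn_max_zero_le u).trans_lt hg

variable {lam Lam c : ℝ} {K : En n → ℝ}

lemma IsKernel.pos (hK : IsKernel n s lam Lam c K) (hlam : 0 < lam) (hc : 0 < c) {y : En n}
    (hy : y ≠ 0) : 0 < K y :=
  lt_of_lt_of_le (by have := norm_pos_iff.2 hy; positivity) (hK.2.2 y hy).1

lemma IsKernel.kerSqOn_le (hK : IsKernel n s lam Lam c K) (u : En n → ℝ) :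
    kerSqOn n Ω K u ≤ ENNReal.ofReal (Lam * c) * gagliardoSqOn n s Ω u := by
  rw [gagliardoSqOn, ← lintegral_const_mul' _ _ ENNReal.ofReal_ne_top]
  refine lintegral_mono fun p => ?_
  rw [← ENNReal.ofReal_mul' (by positivity)]
  refine ENNReal.ofReal_le_ofReal ?_
  by_cases hp : p.1 = p.2
  · simp [hp]
  calc (u p.1 - u p.2) ^ 2 * K (p.1 - p.2)
      ≤ (u p.1 - u p.2) ^ 2 * (Lam * c * ‖p.1 - p.2‖ ^ (-((n : ℝ) + 2 * s))) :=
        mul_le_mul_of_nonneg_left (hK.2.2 _ (sub_ne_zero.2 hp)).2 (sq_nonneg _)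
    _ = _ := by ring

lemma IsKernel.ae_max_zero_eq_of_bilinOn_nonpos (hK : IsKernel n s lam Lam c K)
    (hlam : 0 < lam) (hc : 0 < c) {u : En n → ℝ} (hu : Measurable u)
    (hg : gagliardoSqOn n s Ω u < ⊤) (hbil : bilinOn n Ω K u (fun x => max (u x) 0) ≤ 0) :
    ∀ᵐ p ∂volume.restrict (R2n n Ω), p.1 ≠ p.2 → max (u p.1) 0 = max (u p.2) 0 := by
  set g : En n × En n → ℝ := fun p =>
    (u p.1 - u p.2) * (max (u p.1) 0 - max (u p.2) 0) * K (p.1 - p.2)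
  have hg0 : 0 ≤ g := fun p => by
    by_cases hp : p.1 = p.2
    · simp [g, hp]
    exact mul_nonneg ((sq_nonneg _).trans (sq_sub_max_zero_le_mul _ _))
      (hK.pos hlam hc (sub_ne_zero.2 hp)).le
  have hg_le : ∀ p, ENNReal.ofReal (g p) ≤
      ENNReal.ofReal ((u p.1 - u p.2) ^ 2 * K (p.1 - p.2)) := fun p => by
    refine ENNReal.ofReal_le_ofReal ?_
    by_cases hp : p.1 = p.2
    · simp [g, hp]
    exact mul_le_mul_of_nonneg_right (mul_sub_max_zero_le_sq _ _)
      (hK.pos hlam hc (sub_ne_zero.2 hp)).le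
  have hg_meas : Measurable g := by
    have := hK.1
    fun_prop
  have hg_int : IntegrableOn g (R2n n Ω) :=
    ⟨hg_meas.aestronglyMeasurable, (hasFiniteIntegral_iff_ofReal (ae_of_all _ hg0)).2 <|
      (lintegral_mono hg_le).trans_lt <|
        (hK.kerSqOn_le u).trans_lt (ENNReal.mul_lt_top ENNReal.ofReal_lt_top hg)⟩
  have hg_zero : g =ᵐ[volume.restrict (R2n n Ω)] 0 := by
    refine (integral_eq_zero_iff_of_nonneg hg0 hg_int).1 (le_antisymm ?_ (integral_nonneg hg0))
    rw [bilinOn] at hbil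
    linarith
  filter_upwards [hg_zero] with p hp hne
  exact max_zero_eq_of_mul_sub_max_zero_eq_zero
    ((mul_eq_zero.1 hp).resolve_right (hK.pos hlam hc (sub_ne_zero.2 hne)).ne')

end

/-- if `u` is a weak subsolution of `L_K u + V u = 0` in `Ω`
and `u ≤ 0` a.e. on `ℝⁿ \ Ω`, then `u ≤ 0` a.e. on `ℝⁿ`. -/
theorem stmt9 (n : ℕ) (hn : 2 ≤ n) (s : ℝ)
    (c lam Lam : ℝ) (hlam : 0 < lam) (hc : 0 < c)
    (K : En n → ℝ) (hK : IsKernel n s lam Lam c K)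
    (V : En n → ℝ) (hV0 : ∀ x, 0 ≤ V x)
    (Ω : Set (En n)) (hΩo : IsOpen Ω) (hΩb : Bornology.IsBounded Ω)
    (u : En n → ℝ) (hu_meas : Measurable u)
    (hu_g : gagliardoSqOn n s Ω u < ⊤)
    (hu_V : VIntSq n V Ω u < ⊤)
    (hsub : ∀ φ ∈ Ys0 n s Ω V, (∀ x, 0 ≤ φ x) →
      bilinOn n Ω K u φ + ∫ x in Ω, V x * u x * φ x ≤ 0)
    (hbd : ∀ᵐ x : En n ∂volume, x ∉ Ω → u x ≤ 0) :
    ∀ᵐ x : En n ∂volume, u x ≤ 0 := by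
  have hΩ : MeasurableSet Ω := hΩo.measurableSet
  set φ : En n → ℝ := fun x => max (u x) 0
  have hφY : φ ∈ Ys0 n s Ω V := max_zero_mem_Ys0 hΩ hV0 hu_meas hbd hu_g hu_V
  have hVφ : 0 ≤ ∫ x in Ω, V x * u x * φ x := setIntegral_nonneg hΩ fun x _ => by
    rw [mul_assoc]
    exact mul_nonneg (hV0 x) (mul_max_zero_nonneg _)
  have hflat := hK.ae_max_zero_eq_of_bilinOn_nonpos hlam hc hu_meas hu_g
    (by linarith [hsub φ hφY fun x => le_max_right _ _])
  have hcross : ∀ᵐ p ∂(volume.restrict Ω).prod (volume.restrict Ωᶜ), φ p.1 = φ p.2 := by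
    rw [Measure.prod_restrict, ← Measure.volume_eq_prod]
    filter_upwards [ae_restrict_of_ae_restrict_of_subset
      (show Ω ×ˢ Ωᶜ ⊆ R2n n Ω from fun p hp h => h.1 hp.1) hflat,
      ae_restrict_mem (hΩ.prod hΩ.compl)] with p hp hmem
    exact hp fun h => hmem.2 (h ▸ hmem.1)
  have hφ_out : ∀ᵐ y ∂volume.restrict Ωᶜ, φ y = 0 :=
    (ae_restrict_iff' hΩ.compl).2 (hbd.mono fun x hx hxΩ => max_eq_right (hx hxΩ))
  have : Nonempty (Fin n) := ⟨⟨0, by omega⟩⟩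
  have : NeZero (volume.restrict Ωᶜ) :=
    ⟨by rw [Ne, Measure.restrict_eq_zero]; exact measure_compl_ne_zero_of_isBounded volume hΩb⟩
  have hin := (ae_restrict_iff' hΩ).1 (ae_eq_of_ae_prod_eq hcross hφ_out)
  filter_upwards [hin, hbd] with x hin hout
  by_cases hx : x ∈ Ω
  · exact (le_max_left _ _).trans (hin hx).le
  · exact hout hx
end
end

section
/- Let h ∈ L²(Ω) be nonnegative with ∫_Ω h ≤ 1, and let u ∈ Y^s_0(Ω) be a nonnegative weak solution of L_K u + V u = h in Ω. Then for every p ∈ [1, n/(n−2s)) there exists a constant C > 0 depending only on p, λ, n, s (independent of Ω, u, h, V, x₀, r) such that ‖u‖_{L^p(B_r(x₀))} ≤ C r^{n/p − (n−2s)} for every x₀ ∈ ℝⁿ and every r > 0. -/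
/-!
Testing the equation with the truncation `min u τ` and using `h ≥ 0`, `∫ h ≤ 1`, `V ≥ 0` gives
the energy bound `[min u τ]_s² ≤ 2τ/(λc)`. A point where `u > τ` and a point where `u ≤ τ/2`
at distance at most `R` contribute `(τ/2)² R^{-(n+2s)}` to this energy; choosing `R` so that
`B_R` has volume `2|{u > τ/2}|` gives the recursion `|{u > τ}| ≤ Q τ⁻¹ |{u > τ/2}|^{2s/n}`.
Iterating it along `t/2ᵏ` yields `|{u > t}| ≤ C t^{-n/(n-2s)}` with `C = C(n, s, λ, c)`: the
bound `|{u > t}| ≤ |Ω|` enters only through its finiteness, as the `θᵏ`-th powers of it tend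
to 1. Finally, the layer-cake formula split at height `r^{-(n-2s)}` turns this
weak-`L^{n/(n-2s)}` bound into the local `L^p` bound.
-/

open MeasureTheory Real Filter
open scoped ENNReal RealInnerProductSpace

noncomputable section

lemma sq_min_sub_min_le_mul (a b t : ℝ) :
    (min a t - min b t) ^ 2 ≤ (a - b) * (min a t - min b t) := by
  rcases le_total a t with ha | ha <;> rcases le_total b t with hb | hb <;>
    simp only [min_eq_left, min_eq_right, ha, hb] <;> nlinarith

lemma mul_min_sub_min_le_sq (a b t : ℝ) :
    (a - b) * (min a t - min b t) ≤ (a - b) ^ 2 := by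
  rcases le_total a t with ha | ha <;> rcases le_total b t with hb | hb <;>
    simp only [min_eq_left, min_eq_right, ha, hb] <;> nlinarith

lemma sq_min_sub_min_le_sq (a b t : ℝ) : (min a t - min b t) ^ 2 ≤ (a - b) ^ 2 :=
  (sq_min_sub_min_le_mul a b t).trans (mul_min_sub_min_le_sq a b t)

section Truncation

variable {n : ℕ} {s : ℝ} {u : En n → ℝ}

lemma gagliardoSq_min_le (t : ℝ) : gagliardoSq n s (fun x => min (u x) t) ≤ gagliardoSq n s u :=
  lintegral_mono fun _ => ENNReal.ofReal_le_ofReal <|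
    mul_le_mul_of_nonneg_right (sq_min_sub_min_le_sq _ _ _) (Real.rpow_nonneg (norm_nonneg _) _)

lemma min_mem_Ys0 {Ω : Set (En n)} {V : En n → ℝ} (hV : ∀ x, 0 ≤ V x) (hu : u ∈ Ys0 n s Ω V)
    {t : ℝ} (ht : 0 ≤ t) : (fun x => min (u x) t) ∈ Ys0 n s Ω V := by
  obtain ⟨⟨hum, hzero, hgag⟩, hVu⟩ := hu
  refine ⟨⟨hum.min measurable_const, ?_, (gagliardoSq_min_le t).trans_lt hgag⟩, ?_⟩
  · filter_upwards [hzero] with x hx hxΩ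
    simp [hx hxΩ, ht]
  · refine lt_of_le_of_lt (lintegral_mono fun x => ENNReal.ofReal_le_ofReal ?_) hVu
    have h := sq_min_sub_min_le_sq (u x) 0 t
    rw [min_eq_left ht, sub_zero, sub_zero] at h
    exact mul_le_mul_of_nonneg_left h (hV x)

end Truncation

namespace IsKernel

variable {n : ℕ} {s lam Lam c : ℝ} {K : En n → ℝ}

lemma nonneg_s18 (hK : IsKernel n s lam Lam c K) (hlam : 0 ≤ lam) (hc : 0 ≤ c) {y : En n}
    (hy : y ≠ 0) : 0 ≤ K y :=
  le_trans (by positivity) (hK.2.2 y hy).1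

lemma kerSq_le (hK : IsKernel n s lam Lam c K) (hLam : 0 ≤ Lam) (hc : 0 ≤ c) (u : En n → ℝ) :
    kerSq n K u ≤ ENNReal.ofReal (Lam * c) * gagliardoSq n s u := by
  rw [gagliardoSq, ← lintegral_const_mul' _ _ ENNReal.ofReal_ne_top]
  refine lintegral_mono fun p => ?_
  rw [← ENNReal.ofReal_mul (by positivity)]
  refine ENNReal.ofReal_le_ofReal ?_
  rcases eq_or_ne p.1 p.2 with hp | hp
  · simp [hp]
  · calc (u p.1 - u p.2) ^ 2 * K (p.1 - p.2)
        ≤ (u p.1 - u p.2) ^ 2 * (Lam * c * ‖p.1 - p.2‖ ^ (-((n : ℝ) + 2 * s))) :=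
          mul_le_mul_of_nonneg_left (hK.2.2 _ (sub_ne_zero.mpr hp)).2 (sq_nonneg _)
      _ = _ := by ring

lemma bilin_integrand_min_nonneg (hK : IsKernel n s lam Lam c K) (hlam : 0 ≤ lam) (hc : 0 ≤ c)
    (u : En n → ℝ) (τ : ℝ) (p : En n × En n) :
    0 ≤ (u p.1 - u p.2) * (min (u p.1) τ - min (u p.2) τ) * K (p.1 - p.2) := by
  rcases eq_or_ne p.1 p.2 with hp | hp
  · simp [hp]
  · exact mul_nonneg ((sq_nonneg _).trans (sq_min_sub_min_le_mul _ _ _))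
      (hK.nonneg_s18 hlam hc (sub_ne_zero.mpr hp))

lemma integrable_bilin_integrand_min (hK : IsKernel n s lam Lam c K) (hlam : 0 ≤ lam)
    (hLam : 0 ≤ Lam) (hc : 0 ≤ c) {u : En n → ℝ} (hum : Measurable u)
    (hu : gagliardoSq n s u < ⊤) (τ : ℝ) :
    Integrable fun p : En n × En n =>
      (u p.1 - u p.2) * (min (u p.1) τ - min (u p.2) τ) * K (p.1 - p.2) := by
  have hvm : Measurable fun x => min (u x) τ := hum.min measurable_const
  refine ⟨((((hum.comp measurable_fst).sub (hum.comp measurable_snd)).mul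
    ((hvm.comp measurable_fst).sub (hvm.comp measurable_snd))).mul
    (hK.1.comp (measurable_fst.sub measurable_snd))).aestronglyMeasurable, ?_⟩
  rw [hasFiniteIntegral_iff_ofReal
    (Eventually.of_forall (hK.bilin_integrand_min_nonneg hlam hc u τ))]
  calc _ ≤ kerSq n K u := lintegral_mono fun p => ENNReal.ofReal_le_ofReal <| by
        rcases eq_or_ne p.1 p.2 with hp | hp
        · simp [hp]
        · exact mul_le_mul_of_nonneg_right (mul_min_sub_min_le_sq _ _ _)
            (hK.nonneg_s18 hlam hc (sub_ne_zero.mpr hp))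
    _ ≤ ENNReal.ofReal (Lam * c) * gagliardoSq n s u := hK.kerSq_le hLam hc u
    _ < ⊤ := ENNReal.mul_lt_top ENNReal.ofReal_lt_top hu

lemma ofReal_mul_gagliardoSq_min_le (hK : IsKernel n s lam Lam c K) (hlam : 0 ≤ lam)
    (hLam : 0 ≤ Lam) (hc : 0 ≤ c) {u : En n → ℝ} (hum : Measurable u)
    (hu : gagliardoSq n s u < ⊤) (τ : ℝ) :
    ENNReal.ofReal (lam * c) * gagliardoSq n s (fun x => min (u x) τ) ≤
      ENNReal.ofReal (2 * bilin n K u (fun x => min (u x) τ)) := by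
  set v : En n → ℝ := fun x => min (u x) τ
  have hpoint : ∀ p : En n × En n,
      lam * c * ((v p.1 - v p.2) ^ 2 * ‖p.1 - p.2‖ ^ (-((n : ℝ) + 2 * s))) ≤
        (u p.1 - u p.2) * (v p.1 - v p.2) * K (p.1 - p.2) := fun p => by
    rcases eq_or_ne p.1 p.2 with hp | hp
    · simp [hp]
    · rw [mul_left_comm]
      exact mul_le_mul (sq_min_sub_min_le_mul _ _ _) (hK.2.2 _ (sub_ne_zero.mpr hp)).1
        (by positivity) ((sq_nonneg _).trans (sq_min_sub_min_le_mul _ _ _))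
  calc ENNReal.ofReal (lam * c) * gagliardoSq n s v
      = ∫⁻ p, ENNReal.ofReal
          (lam * c * ((v p.1 - v p.2) ^ 2 * ‖p.1 - p.2‖ ^ (-((n : ℝ) + 2 * s)))) := by
        rw [gagliardoSq, ← lintegral_const_mul' _ _ ENNReal.ofReal_ne_top]
        exact lintegral_congr fun p => (ENNReal.ofReal_mul (by positivity)).symm
    _ ≤ ∫⁻ p, ENNReal.ofReal ((u p.1 - u p.2) * (v p.1 - v p.2) * K (p.1 - p.2)) :=
        lintegral_mono fun p => ENNReal.ofReal_le_ofReal (hpoint p)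
    _ = ENNReal.ofReal (2 * bilin n K u v) := by
        rw [← ofReal_integral_eq_lintegral_ofReal
            (hK.integrable_bilin_integrand_min hlam hLam hc hum hu τ)
            (Eventually.of_forall (hK.bilin_integrand_min_nonneg hlam hc u τ)), bilin,
          ← mul_assoc, mul_one_div_cancel two_ne_zero, one_mul]

end IsKernel

section WeakSolution

variable {n : ℕ} {s lam Lam c : ℝ} {K V h u : En n → ℝ} {Ω : Set (En n)}

lemma bilin_min_le_of_weakSolution (hΩ : volume Ω ≠ ⊤) (hV : ∀ x, 0 ≤ V x)
    (hh2 : MemLp h 2 (volume.restrict Ω)) (hh0 : ∀ᵐ x ∂volume.restrict Ω, 0 ≤ h x)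
    (hh1 : (∫ x in Ω, h x) ≤ 1) (hu : u ∈ Ys0 n s Ω V) (hu0 : ∀ᵐ x : En n ∂volume, 0 ≤ u x)
    (hweak : ∀ φ ∈ Ys0 n s Ω V,
      bilin n K u φ + ∫ x in Ω, V x * u x * φ x = ∫ x in Ω, h x * φ x)
    {τ : ℝ} (hτ : 0 ≤ τ) : bilin n K u (fun x => min (u x) τ) ≤ τ := by
  have : IsFiniteMeasure (volume.restrict Ω) := isFiniteMeasure_restrict.mpr hΩ
  have hV_term : 0 ≤ ∫ x in Ω, V x * u x * min (u x) τ := by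
    refine integral_nonneg_of_ae ?_
    filter_upwards [ae_restrict_of_ae hu0] with x hx
    exact mul_nonneg (mul_nonneg (hV x) hx) (le_min hx hτ)
  have hh_term : (∫ x in Ω, h x * min (u x) τ) ≤ ∫ x in Ω, τ * h x := by
    refine integral_mono_of_nonneg ?_ ((hh2.integrable (by norm_num)).const_mul τ) ?_
    · filter_upwards [hh0, ae_restrict_of_ae hu0] with x hx hux
      exact mul_nonneg hx (le_min hux hτ)
    · filter_upwards [hh0] with x hx
      rw [mul_comm τ]
      exact mul_le_mul_of_nonneg_left (min_le_right _ _) hx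
  rw [integral_const_mul] at hh_term
  have := hweak _ (min_mem_Ys0 hV hu hτ)
  nlinarith [mul_le_mul_of_nonneg_left hh1 hτ]

lemma gagliardoSq_min_le_of_weakSolution (hK : IsKernel n s lam Lam c K) (hlam : 0 < lam)
    (hLam : lam ≤ Lam) (hc : 0 < c) (hΩ : volume Ω ≠ ⊤) (hV : ∀ x, 0 ≤ V x)
    (hh2 : MemLp h 2 (volume.restrict Ω)) (hh0 : ∀ᵐ x ∂volume.restrict Ω, 0 ≤ h x)
    (hh1 : (∫ x in Ω, h x) ≤ 1) (hu : u ∈ Ys0 n s Ω V) (hu0 : ∀ᵐ x : En n ∂volume, 0 ≤ u x)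
    (hweak : ∀ φ ∈ Ys0 n s Ω V,
      bilin n K u φ + ∫ x in Ω, V x * u x * φ x = ∫ x in Ω, h x * φ x)
    {τ : ℝ} (hτ : 0 ≤ τ) :
    gagliardoSq n s (fun x => min (u x) τ) ≤ ENNReal.ofReal (2 * τ / (lam * c)) := by
  have hlc : 0 < lam * c := mul_pos hlam hc
  have henergy := hK.ofReal_mul_gagliardoSq_min_le hlam.le (hlam.le.trans hLam) hc.le hu.1.1
    hu.1.2.2 τ
  have hbilin := bilin_min_le_of_weakSolution hΩ hV hh2 hh0 hh1 hu hu0 hweak hτ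
  rw [ENNReal.ofReal_div_of_pos hlc, ENNReal.le_div_iff_mul_le
    (Or.inl (ENNReal.ofReal_pos.mpr hlc).ne') (Or.inl ENNReal.ofReal_ne_top), mul_comm]
  exact henergy.trans (ENNReal.ofReal_le_ofReal (by linarith))

end WeakSolution

section LevelSets

variable {n : ℕ}

def ballVol (n : ℕ) : ℝ := (volume (Metric.ball (0 : En n) 1)).toReal

lemma ballVol_pos (n : ℕ) : 0 < ballVol n :=
  ENNReal.toReal_pos (Metric.measure_ball_pos volume 0 one_pos).ne' measure_ball_lt_top.ne

lemma volume_ball_eq (x : En n) {r : ℝ} (hr : 0 < r) :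
    volume (Metric.ball x r) = ENNReal.ofReal (ballVol n * r ^ n) := by
  rw [Measure.addHaar_ball_of_pos volume x hr, finrank_euclideanSpace_fin, mul_comm, ballVol,
    ENNReal.ofReal_mul ENNReal.toReal_nonneg, ENNReal.ofReal_toReal measure_ball_lt_top.ne]

lemma ofReal_rpow_neg_mul_le_setLIntegral_prod [NeZero n] {A D : Set (En n)} (hA : MeasurableSet A)
    (hD : MeasurableSet D) {R α : ℝ} (hα : 0 ≤ α) {a : ℝ≥0∞}
    (hball : ∀ x ∈ A, a ≤ volume (D ∩ Metric.ball x R)) :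
    ENNReal.ofReal (R ^ (-α)) * a * volume A ≤
      ∫⁻ p in A ×ˢ D, ENNReal.ofReal (‖p.1 - p.2‖ ^ (-α)) := by
  have hmeas : Measurable fun p : En n × En n => ENNReal.ofReal (‖p.1 - p.2‖ ^ (-α)) := by
    fun_prop
  rw [Measure.volume_eq_prod, ← Measure.prod_restrict, lintegral_prod _ hmeas.aemeasurable,
    ← setLIntegral_const]
  refine setLIntegral_mono' hA fun x hx => ?_
  have hpt : ∀ᵐ y ∂volume.restrict (D ∩ Metric.ball x R),
      ENNReal.ofReal (R ^ (-α)) ≤ ENNReal.ofReal (‖x - y‖ ^ (-α)) := by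
    rw [ae_restrict_iff' (hD.inter measurableSet_ball)]
    filter_upwards [volume.ae_ne x] with y hyx hy
    have hd : 0 < ‖x - y‖ := norm_pos_iff.mpr (sub_ne_zero.mpr hyx.symm)
    have hdR : ‖x - y‖ ≤ R := by
      rw [← dist_eq_norm, dist_comm]
      exact (Metric.mem_ball.mp hy.2).le
    exact ENNReal.ofReal_le_ofReal (Real.rpow_le_rpow_of_nonpos hd hdR (neg_nonpos.mpr hα))
  calc ENNReal.ofReal (R ^ (-α)) * a
      ≤ ENNReal.ofReal (R ^ (-α)) * volume (D ∩ Metric.ball x R) := by gcongr; exact hball x hx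
    _ = ∫⁻ _ in D ∩ Metric.ball x R, ENNReal.ofReal (R ^ (-α)) := (setLIntegral_const _ _).symm
    _ ≤ ∫⁻ y in D ∩ Metric.ball x R, ENNReal.ofReal (‖x - y‖ ^ (-α)) := lintegral_mono_ae hpt
    _ ≤ ∫⁻ y in D, ENNReal.ofReal (‖(x, y).1 - (x, y).2‖ ^ (-α)) :=
        lintegral_mono_set Set.inter_subset_left

lemma ofReal_sq_mul_setLIntegral_le_gagliardoSq {s : ℝ} {v : En n → ℝ} {A D : Set (En n)}
    (hAD : MeasurableSet (A ×ˢ D)) {δ : ℝ} (hδ : 0 ≤ δ)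
    (hgap : ∀ x ∈ A, ∀ y ∈ D, δ ≤ v x - v y) :
    ENNReal.ofReal (δ ^ 2) *
        ∫⁻ p in A ×ˢ D, ENNReal.ofReal (‖p.1 - p.2‖ ^ (-((n : ℝ) + 2 * s))) ≤
      gagliardoSq n s v := by
  rw [← lintegral_const_mul' _ _ ENNReal.ofReal_ne_top]
  refine (setLIntegral_mono' hAD fun p hp => ?_).trans (setLIntegral_le_lintegral _ _)
  rw [← ENNReal.ofReal_mul (sq_nonneg δ)]
  exact ENNReal.ofReal_le_ofReal (mul_le_mul_of_nonneg_right
    (pow_le_pow_left₀ hδ (hgap _ hp.1 _ hp.2) 2) (Real.rpow_nonneg (norm_nonneg _) _))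

lemma le_measure_inter_of_measure_sdiff_le {α : Type*} [MeasurableSpace α] {μ : Measure α}
    {B D : Set α} {a : ℝ≥0∞} (ha : a ≠ ⊤) (hB : a + a ≤ μ B) (hD : μ (B \ D) ≤ a) :
    a ≤ μ (D ∩ B) := by
  rw [Set.inter_comm]
  exact (ENNReal.add_le_add_iff_right ha).mp
    ((hB.trans (measure_le_inter_add_sdiff μ B D)).trans (add_le_add_right hD _))

lemma ofReal_mul_volume_lt_le_gagliardoSq_min [NeZero n] {s : ℝ} (hs : 0 ≤ s) {u : En n → ℝ}
    (hum : Measurable u) {τ a : ℝ} (hτ : 0 ≤ τ) (ha : 0 < a)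
    (hvol : volume {x | τ / 2 < u x} = ENNReal.ofReal a) :
    ENNReal.ofReal ((τ / 2) ^ 2) *
        (ENNReal.ofReal (((2 * a / ballVol n) ^ (n : ℝ)⁻¹) ^ (-((n : ℝ) + 2 * s))) *
          ENNReal.ofReal a * volume {x | τ < u x}) ≤
      gagliardoSq n s (fun x => min (u x) τ) := by
  set A := {x | τ < u x}
  set D := {y | u y ≤ τ / 2}
  set R := (2 * a / ballVol n) ^ (n : ℝ)⁻¹
  have hω := ballVol_pos n
  have hR : 0 < R := Real.rpow_pos_of_pos (div_pos (by positivity) hω) _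
  have hball : ∀ x ∈ A, ENNReal.ofReal a ≤ volume (D ∩ Metric.ball x R) := fun x _ => by
    refine le_measure_inter_of_measure_sdiff_le ENNReal.ofReal_ne_top ?_ ?_
    · rw [volume_ball_eq x hR, Real.rpow_inv_natCast_pow (by positivity) (NeZero.ne n),
        mul_div_cancel₀ _ hω.ne', two_mul, ENNReal.ofReal_add ha.le ha.le]
    · exact hvol ▸ measure_mono fun y (hy : y ∈ _ \ D) =>
        show τ / 2 < u y from not_le.mp hy.2
  have hgap : ∀ x ∈ A, ∀ y ∈ D, τ / 2 ≤ min (u x) τ - min (u y) τ :=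
    fun x (hx : τ < u x) y (hy : u y ≤ τ / 2) => by
    rw [min_eq_right hx.le]
    linarith [min_le_left (u y) τ]
  have hAm : MeasurableSet A := measurableSet_lt measurable_const hum
  have hDm : MeasurableSet D := measurableSet_le hum measurable_const
  calc _ ≤ ENNReal.ofReal ((τ / 2) ^ 2) *
        ∫⁻ p in A ×ˢ D, ENNReal.ofReal (‖p.1 - p.2‖ ^ (-((n : ℝ) + 2 * s))) := by
        gcongr
        exact ofReal_rpow_neg_mul_le_setLIntegral_prod hAm hDm (by positivity) hball
    _ ≤ gagliardoSq n s (fun x => min (u x) τ) :=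
        ofReal_sq_mul_setLIntegral_le_gagliardoSq (hAm.prod hDm) (by positivity) hgap

lemma two_mul_div_rpow_inv_rpow {n : ℕ} (hn : n ≠ 0) {a ω : ℝ} (ha : 0 < a) (hω : 0 < ω)
    (σ : ℝ) :
    ((2 * a / ω) ^ (n : ℝ)⁻¹) ^ ((n : ℝ) + σ) =
      (2 / ω) ^ (((n : ℝ) + σ) / n) * a ^ (σ / n) * a := by
  have hexp : ((n : ℝ) + σ) / n = σ / n + 1 := by
    field_simp
    ring
  rw [← Real.rpow_mul (by positivity), inv_mul_eq_div, mul_div_right_comm,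
    Real.mul_rpow (by positivity) ha.le, hexp, Real.rpow_add_one ha.ne', mul_assoc]

lemma volume_lt_le_of_gagliardoSq_min_le [NeZero n] {s : ℝ} (hs : 0 ≤ s) {u : En n → ℝ}
    (hum : Measurable u) {τ E : ℝ} (hτ : 0 < τ) (hE : 0 ≤ E)
    (hgag : gagliardoSq n s (fun x => min (u x) τ) ≤ ENNReal.ofReal E)
    (hfin : volume {x | τ / 2 < u x} ≠ ⊤) :
    (volume {x | τ < u x}).toReal ≤
      4 * E / τ ^ 2 * (2 / ballVol n) ^ (((n : ℝ) + 2 * s) / n) *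
        (volume {x | τ / 2 < u x}).toReal ^ (2 * s / n) := by
  set a := (volume {x | τ / 2 < u x}).toReal
  set X := (volume {x | τ < u x}).toReal
  set ω := ballVol n
  set α := (n : ℝ) + 2 * s
  have hω := ballVol_pos n
  have hB : 0 < (2 / ω) ^ (α / n) := Real.rpow_pos_of_pos (div_pos two_pos hω) _
  rcases (ENNReal.toReal_nonneg : 0 ≤ a).eq_or_lt with ha | ha
  · have hX : X = 0 := by
      rw [ENNReal.toReal_eq_zero_iff]
      refine Or.inl (measure_mono_null (fun x (hx : τ < u x) => ?_)
        (((ENNReal.toReal_eq_zero_iff _).mp ha.symm).resolve_right hfin))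
      change τ / 2 < u x
      linarith
    rw [hX]
    exact mul_nonneg (mul_nonneg (div_nonneg (by linarith) (by positivity)) hB.le)
      (Real.rpow_nonneg ha.le _)
  have hreal : (τ / 2) ^ 2 * ((((2 * a / ω) ^ (n : ℝ)⁻¹) ^ α)⁻¹ * a * X) ≤ E := by
    have := ENNReal.toReal_mono ENNReal.ofReal_ne_top
      ((ofReal_mul_volume_lt_le_gagliardoSq_min hs hum hτ.le ha
        (ENNReal.ofReal_toReal hfin).symm).trans hgag)
    rwa [ENNReal.toReal_ofReal hE, ENNReal.toReal_mul, ENNReal.toReal_mul, ENNReal.toReal_mul,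
      ENNReal.toReal_ofReal (by positivity), ENNReal.toReal_ofReal (by positivity),
      ENNReal.toReal_ofReal ha.le, Real.rpow_neg (by positivity)] at this
  rw [two_mul_div_rpow_inv_rpow (NeZero.ne n) ha hω] at hreal
  have haθ : 0 < a ^ (2 * s / n) := Real.rpow_pos_of_pos ha _
  have ha' : a ≠ 0 := ha.ne'
  calc X = (τ / 2) ^ 2 * (((2 / ω) ^ (α / n) * a ^ (2 * s / n) * a)⁻¹ * a * X) *
        (4 / τ ^ 2 * (2 / ω) ^ (α / n) * a ^ (2 * s / n)) := by
        field_simp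
        ring
    _ ≤ E * (4 / τ ^ 2 * (2 / ω) ^ (α / n) * a ^ (2 * s / n)) := by gcongr
    _ = _ := by ring

end LevelSets

section Iteration

variable {θ : ℝ}

lemma le_one_of_le_rpow_succ (hθ0 : 0 ≤ θ) (hθ1 : θ < 1) {b : ℕ → ℝ} {X : ℝ}
    (hb0 : ∀ k, 0 ≤ b k) (hbX : ∀ k, b k ≤ X) (hb : ∀ k, b k ≤ b (k + 1) ^ θ) : b 0 ≤ 1 := by
  have hpow : ∀ k : ℕ, b 0 ≤ b k ^ θ ^ k := by
    intro k
    induction k with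
    | zero => simp
    | succ k ih =>
      calc b 0 ≤ b k ^ θ ^ k := ih
        _ ≤ (b (k + 1) ^ θ) ^ θ ^ k := Real.rpow_le_rpow (hb0 k) (hb k) (by positivity)
        _ = b (k + 1) ^ θ ^ (k + 1) := by rw [← Real.rpow_mul (hb0 _), pow_succ']
  have hY : 0 < max X 1 := lt_max_of_lt_right one_pos
  have hlim : Tendsto (fun k : ℕ => max X 1 ^ θ ^ k) atTop (nhds 1) := by
    simpa [Function.comp_def] using (Real.continuousAt_const_rpow hY.ne').tendsto.comp
      (tendsto_pow_atTop_nhds_zero_of_lt_one hθ0 hθ1)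
  exact ge_of_tendsto' hlim fun k => (hpow k).trans
    (Real.rpow_le_rpow (hb0 k) ((hbX k).trans (le_max_left _ _)) (by positivity))

/-- Normalising by `P ^ β` turns `a k ≤ P a (k+1) ^ θ` into `b k ≤ b (k+1) ^ θ`, because
`P ^ β = P * (P ^ β) ^ θ`. -/
lemma le_rpow_of_le_mul_rpow_succ (hθ0 : 0 ≤ θ) (hθ1 : θ < 1) {β : ℝ} (hβ : (1 - θ) * β = 1)
    {P X : ℝ} (hP : 0 < P) {a : ℕ → ℝ} (ha0 : ∀ k, 0 ≤ a k) (haX : ∀ k, a k ≤ X)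
    (ha : ∀ k, a k ≤ P * a (k + 1) ^ θ) : a 0 ≤ P ^ β := by
  have hPβ : 0 < P ^ β := Real.rpow_pos_of_pos hP β
  have hPβ' : P ^ β = P * P ^ (β * θ) :=
    calc P ^ β = P ^ (1 + β * θ) := by congr 1; linarith
      _ = P * P ^ (β * θ) := by rw [Real.rpow_add hP, Real.rpow_one]
  have hstep : ∀ k, a k / P ^ β ≤ (a (k + 1) / P ^ β) ^ θ := fun k => by
    rw [Real.div_rpow (ha0 _) hPβ.le, ← Real.rpow_mul hP.le,
      div_le_div_iff₀ hPβ (Real.rpow_pos_of_pos hP _), hPβ']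
    linarith [mul_le_mul_of_nonneg_right (ha k) (Real.rpow_nonneg hP.le (β * θ))]
  have hb := le_one_of_le_rpow_succ hθ0 hθ1 (fun k => div_nonneg (ha0 k) hPβ.le)
    (fun k => div_le_div_of_nonneg_right (haX k) hPβ.le) hstep
  rwa [div_le_one hPβ] at hb

lemma rpow_mul_inv_eq_two_rpow_mul {β : ℝ} (hβ : (1 - θ) * β = 1) {t : ℝ}
    (ht : 0 < t) : t ^ β * t⁻¹ = 2 ^ (θ * β) * ((t / 2) ^ β) ^ θ := by
  rw [← Real.rpow_mul (by positivity), Real.div_rpow ht.le zero_le_two, mul_comm β θ,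
    mul_div_cancel₀ _ (Real.rpow_pos_of_pos two_pos _).ne', ← Real.rpow_neg_one,
    ← Real.rpow_add ht]
  congr 1
  linarith

theorem le_mul_rpow_neg_of_le_mul_inv_rpow_half (hθ0 : 0 ≤ θ) (hθ1 : θ < 1) {β : ℝ}
    (hβ : (1 - θ) * β = 1) {Q M : ℝ} (hQ : 0 < Q) {f : ℝ → ℝ}
    (hf : ∀ t, 0 < t → 0 ≤ f t ∧ f t ≤ M) (hrec : ∀ t, 0 < t → f t ≤ Q * t⁻¹ * f (t / 2) ^ θ)
    {t : ℝ} (ht : 0 < t) : f t ≤ (Q * 2 ^ (θ * β)) ^ β * t ^ (-β) := by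
  have hβ0 : 0 < β := pos_of_mul_pos_right (hβ ▸ one_pos) (by linarith)
  set τ : ℕ → ℝ := fun k => t / 2 ^ k
  have hτ : ∀ k, 0 < τ k := fun k => by positivity
  -- `t ↦ t ^ β * f t` obeys the scale-free recursion `g t ≤ P * g (t / 2) ^ θ`, as `β - 1 = θ β`.
  have hweighted := le_rpow_of_le_mul_rpow_succ (P := Q * 2 ^ (θ * β))
    (a := fun k => τ k ^ β * f (τ k)) (X := t ^ β * M)
    hθ0 hθ1 hβ (by positivity) (fun k => mul_nonneg (by positivity) (hf _ (hτ k)).1)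
    (fun k => mul_le_mul (Real.rpow_le_rpow (hτ k).le
      (div_le_self ht.le (one_le_pow₀ one_le_two)) hβ0.le) (hf _ (hτ k)).2
      (hf _ (hτ k)).1 (by positivity))
    fun k => by
      have hτk : τ (k + 1) = τ k / 2 := by simp only [τ, pow_succ, div_div]
      calc τ k ^ β * f (τ k) ≤ τ k ^ β * (Q * (τ k)⁻¹ * f (τ k / 2) ^ θ) :=
            mul_le_mul_of_nonneg_left (hrec _ (hτ k)) (by positivity)
        _ = Q * 2 ^ (θ * β) * (τ (k + 1) ^ β * f (τ (k + 1))) ^ θ := by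
            rw [hτk, Real.mul_rpow (by positivity) (hf _ (by positivity)).1,
              ← mul_assoc, ← mul_assoc, mul_comm (τ k ^ β), mul_assoc Q, mul_assoc Q,
              rpow_mul_inv_eq_two_rpow_mul hβ (hτ k)]
            ring
  simp only [τ, pow_zero, div_one] at hweighted
  rw [Real.rpow_neg ht.le, ← div_eq_mul_inv, le_div_iff₀ (by positivity), mul_comm]
  exact hweighted

end Iteration

section LayerCake

lemma lintegral_Ioc_ofReal_rpow_sub_one {p T : ℝ} (hp : 0 < p) (hT : 0 < T) :
    ∫⁻ t in Set.Ioc 0 T, ENNReal.ofReal (t ^ (p - 1)) = ENNReal.ofReal (T ^ p / p) := by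
  have hint : IntegrableOn (fun t : ℝ => t ^ (p - 1)) (Set.Ioc 0 T) := by
    rw [← Set.uIoc_of_le hT.le, ← intervalIntegrable_iff]
    exact intervalIntegral.intervalIntegrable_rpow' (by linarith)
  rw [← ofReal_integral_eq_lintegral_ofReal hint
      ((ae_restrict_mem measurableSet_Ioc).mono fun t ht => Real.rpow_nonneg ht.1.le _),
    ← intervalIntegral.integral_of_le hT.le, integral_rpow (Or.inl (by linarith)),
    sub_add_cancel, Real.zero_rpow hp.ne', sub_zero]

lemma lintegral_Ioi_ofReal_rpow_sub_one_sub {p β T : ℝ} (hpβ : p < β) (hT : 0 < T) :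
    ∫⁻ t in Set.Ioi T, ENNReal.ofReal (t ^ (p - 1 - β)) =
      ENNReal.ofReal (T ^ (p - β) / (β - p)) := by
  have hexp : p - 1 - β < -1 := by linarith
  rw [← ofReal_integral_eq_lintegral_ofReal (integrableOn_Ioi_rpow_of_lt hexp hT)
      ((ae_restrict_mem measurableSet_Ioi).mono fun t (ht : T < t) =>
        Real.rpow_nonneg (hT.trans ht).le _),
    integral_Ioi_rpow_of_lt hexp hT, show p - 1 - β + 1 = p - β by ring, neg_div,
    ← div_neg, neg_sub]

variable {α : Type*} [MeasurableSpace α] {μ : Measure α} {u : α → ℝ}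

lemma lintegral_ofReal_rpow_le_of_meas_lt_le (hu0 : 0 ≤ᵐ[μ] u) (hum : AEMeasurable u μ)
    {p β m C T : ℝ} (hp : 0 < p) (hpβ : p < β) (hm : 0 ≤ m) (hC : 0 ≤ C) (hT : 0 < T)
    (hvol : ∀ t, μ {x | t < u x} ≤ ENNReal.ofReal m)
    (hdist : ∀ t, 0 < t → μ {x | t < u x} ≤ ENNReal.ofReal (C * t ^ (-β))) :
    ∫⁻ x, ENNReal.ofReal (u x ^ p) ∂μ ≤
      ENNReal.ofReal (m * T ^ p + p * C * T ^ (p - β) / (β - p)) := by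
  rw [lintegral_rpow_eq_lintegral_meas_lt_mul μ hu0 hum hp, ← Set.Ioc_union_Ioi_eq_Ioi hT.le,
    lintegral_union measurableSet_Ioi (Set.Ioc_disjoint_Ioi le_rfl)]
  have hlow : ∫⁻ t in Set.Ioc 0 T, μ {x | t < u x} * ENNReal.ofReal (t ^ (p - 1)) ≤
      ENNReal.ofReal m * ENNReal.ofReal (T ^ p / p) :=
    calc _ ≤ ∫⁻ t in Set.Ioc 0 T, ENNReal.ofReal m * ENNReal.ofReal (t ^ (p - 1)) :=
          lintegral_mono fun t => by gcongr; exact hvol t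
      _ = _ := by
          rw [lintegral_const_mul' _ _ ENNReal.ofReal_ne_top,
            lintegral_Ioc_ofReal_rpow_sub_one hp hT]
  have hhigh : ∫⁻ t in Set.Ioi T, μ {x | t < u x} * ENNReal.ofReal (t ^ (p - 1)) ≤
      ENNReal.ofReal C * ENNReal.ofReal (T ^ (p - β) / (β - p)) :=
    calc _ ≤ ∫⁻ t in Set.Ioi T, ENNReal.ofReal C * ENNReal.ofReal (t ^ (p - 1 - β)) := by
          refine setLIntegral_mono' measurableSet_Ioi fun t (ht : T < t) => ?_
          have ht0 : 0 < t := hT.trans ht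
          calc μ {x | t < u x} * ENNReal.ofReal (t ^ (p - 1))
              ≤ ENNReal.ofReal (C * t ^ (-β)) * ENNReal.ofReal (t ^ (p - 1)) := by
                gcongr; exact hdist t ht0
            _ = ENNReal.ofReal C * ENNReal.ofReal (t ^ (p - 1 - β)) := by
                rw [← ENNReal.ofReal_mul (by positivity), ← ENNReal.ofReal_mul hC, mul_assoc,
                  ← Real.rpow_add ht0, neg_add_eq_sub, sub_sub, add_comm 1 β, ← sub_sub]
      _ = _ := by
          rw [lintegral_const_mul' _ _ ENNReal.ofReal_ne_top,
            lintegral_Ioi_ofReal_rpow_sub_one_sub hpβ hT]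
  have hβp : 0 < β - p := sub_pos.mpr hpβ
  calc ENNReal.ofReal p * (_ + _)
      ≤ ENNReal.ofReal p * (ENNReal.ofReal m * ENNReal.ofReal (T ^ p / p) +
          ENNReal.ofReal C * ENNReal.ofReal (T ^ (p - β) / (β - p))) := by gcongr
    _ = _ := by
        rw [← ENNReal.ofReal_mul hm, ← ENNReal.ofReal_mul hC,
          ← ENNReal.ofReal_add (by positivity) (by positivity), ← ENNReal.ofReal_mul hp.le]
        congr 1
        field_simp

lemma eLpNorm_le_ofReal_rpow_inv_of_lintegral_le (hu0 : 0 ≤ᵐ[μ] u) {p A : ℝ} (hp : 0 < p)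
    (hA : 0 ≤ A) (h : ∫⁻ x, ENNReal.ofReal (u x ^ p) ∂μ ≤ ENNReal.ofReal A) :
    eLpNorm u (ENNReal.ofReal p) μ ≤ ENNReal.ofReal (A ^ p⁻¹) := by
  rw [eLpNorm_eq_lintegral_rpow_enorm_toReal (by simpa using hp) ENNReal.ofReal_ne_top,
    ENNReal.toReal_ofReal hp.le, ← ENNReal.ofReal_rpow_of_nonneg hA (by positivity), one_div]
  refine ENNReal.rpow_le_rpow (le_of_eq_of_le (lintegral_congr_ae ?_) h) (by positivity)
  filter_upwards [hu0] with x hx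
  rw [Real.enorm_eq_ofReal hx, ENNReal.ofReal_rpow_of_nonneg hx hp.le]

end LayerCake

theorem eLpNorm_restrict_ball_le {n : ℕ} {u : En n → ℝ} (hum : Measurable u)
    (hu0 : ∀ᵐ x : En n ∂volume, 0 ≤ u x) {d p C : ℝ} (hd : 0 < d) (hp : 0 < p)
    (hpβ : p < n / d) (hC : 0 ≤ C)
    (hdist : ∀ t, 0 < t → volume {x | t < u x} ≤ ENNReal.ofReal (C * t ^ (-(n / d))))
    (x₀ : En n) {r : ℝ} (hr : 0 < r) :
    eLpNorm u (ENNReal.ofReal p) (volume.restrict (Metric.ball x₀ r)) ≤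
      ENNReal.ofReal ((ballVol n + p * C / (n / d - p)) ^ p⁻¹ * r ^ ((n : ℝ) / p - d)) := by
  have hβp : 0 < n / d - p := sub_pos.mpr hpβ
  have hG : 0 ≤ ballVol n + p * C / (n / d - p) := by
    have := ballVol_pos n
    positivity
  have hmeas : ∀ t, MeasurableSet {x | t < u x} := fun t => measurableSet_lt measurable_const hum
  have hlayer := lintegral_ofReal_rpow_le_of_meas_lt_le (μ := volume.restrict (Metric.ball x₀ r))
    (m := ballVol n * r ^ n)
    (ae_restrict_of_ae hu0) hum.aemeasurable hp hpβ (by have := ballVol_pos n; positivity) hC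
    (Real.rpow_pos_of_pos hr (-d))
    (fun t => by
      rw [Measure.restrict_apply (hmeas t), ← volume_ball_eq x₀ hr]
      exact measure_mono Set.inter_subset_right)
    (fun t ht => by
      rw [Measure.restrict_apply (hmeas t)]
      exact (measure_mono Set.inter_subset_left).trans (hdist t ht))
  have hscale : ballVol n * r ^ n * (r ^ (-d)) ^ p +
      p * C * (r ^ (-d)) ^ (p - n / d) / (n / d - p) =
      (ballVol n + p * C / (n / d - p)) * r ^ ((n : ℝ) - p * d) := by
    rw [← Real.rpow_mul hr.le, ← Real.rpow_mul hr.le, ← Real.rpow_natCast,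
      mul_assoc, ← Real.rpow_add hr, show -d * (p - n / d) = n - p * d by field_simp; ring]
    ring_nf
  rw [hscale] at hlayer
  refine (eLpNorm_le_ofReal_rpow_inv_of_lintegral_le (ae_restrict_of_ae hu0) hp
    (by positivity) hlayer).trans_eq ?_
  rw [Real.mul_rpow hG (by positivity), ← Real.rpow_mul hr.le]
  congr 3
  field_simp

section Solution

variable {n : ℕ} {s lam Lam c : ℝ} {K V h u : En n → ℝ} {Ω : Set (En n)}

lemma volume_lt_le_of_mem_Xs0 (hu : u ∈ Xs0 n s Ω) {t : ℝ} (ht : 0 ≤ t) :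
    volume {x | t < u x} ≤ volume Ω := by
  refine measure_mono_ae ?_
  filter_upwards [hu.2.1] with x hx (hxt : t < u x)
  by_contra hxΩ
  rw [hx hxΩ] at hxt
  exact hxt.not_ge ht

-- The constant `Q` of the recursion `|{u > τ}| ≤ Q τ⁻¹ |{u > τ/2}|^{2s/n}` for weak solutions.
def levelSetRecConst (n : ℕ) (s lam c : ℝ) : ℝ :=
  8 / (lam * c) * (2 / ballVol n) ^ (((n : ℝ) + 2 * s) / n)

def levelSetDecayConst (n : ℕ) (s lam c : ℝ) : ℝ :=
  (levelSetRecConst n s lam c * 2 ^ (2 * s / n * (n / (n - 2 * s)))) ^ ((n : ℝ) / (n - 2 * s))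

lemma levelSetRecConst_pos (n : ℕ) (s : ℝ) (hlam : 0 < lam) (hc : 0 < c) :
    0 < levelSetRecConst n s lam c := by
  have := ballVol_pos n
  unfold levelSetRecConst
  positivity

lemma levelSetDecayConst_nonneg (n : ℕ) (s : ℝ) (hlam : 0 < lam) (hc : 0 < c) :
    0 ≤ levelSetDecayConst n s lam c :=
  Real.rpow_nonneg (mul_nonneg (levelSetRecConst_pos n s hlam hc).le (by positivity)) _

theorem volume_lt_le_of_weakSolution (hs : 0 ≤ s) (hsn : 2 * s < n)
    (hK : IsKernel n s lam Lam c K)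
    (hlam : 0 < lam) (hLam : lam ≤ Lam) (hc : 0 < c) (hΩ : volume Ω ≠ ⊤) (hV : ∀ x, 0 ≤ V x)
    (hh2 : MemLp h 2 (volume.restrict Ω)) (hh0 : ∀ᵐ x ∂volume.restrict Ω, 0 ≤ h x)
    (hh1 : (∫ x in Ω, h x) ≤ 1) (hu : u ∈ Ys0 n s Ω V) (hu0 : ∀ᵐ x : En n ∂volume, 0 ≤ u x)
    (hweak : ∀ φ ∈ Ys0 n s Ω V,
      bilin n K u φ + ∫ x in Ω, V x * u x * φ x = ∫ x in Ω, h x * φ x)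
    {t : ℝ} (ht : 0 < t) :
    volume {x | t < u x} ≤
      ENNReal.ofReal (levelSetDecayConst n s lam c * t ^ (-((n : ℝ) / (n - 2 * s)))) := by
  have hn : (0 : ℝ) < n := by linarith
  have : NeZero n := ⟨by exact_mod_cast hn.ne'⟩
  have hfin : ∀ t, 0 ≤ t → volume {x | t < u x} ≠ ⊤ := fun t ht =>
    ne_top_of_le_ne_top hΩ (volume_lt_le_of_mem_Xs0 hu.1 ht)
  have hθ1 : 2 * s / n < 1 := (div_lt_one hn).mpr hsn
  have hβ : (1 - 2 * s / n) * (n / (n - 2 * s)) = 1 := by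
    field_simp [(sub_pos.mpr hsn).ne']
  have hQ := levelSetRecConst_pos n s hlam hc
  have hrec : ∀ τ, 0 < τ → (volume {x | τ < u x}).toReal ≤
      levelSetRecConst n s lam c * τ⁻¹ * (volume {x | τ / 2 < u x}).toReal ^ (2 * s / n) :=
    fun τ hτ => (volume_lt_le_of_gagliardoSq_min_le hs hu.1.1 hτ (by positivity)
      (gagliardoSq_min_le_of_weakSolution hK hlam hLam hc hΩ hV hh2 hh0 hh1 hu hu0 hweak hτ.le)
      (hfin _ (by positivity))).trans_eq (by unfold levelSetRecConst; field_simp; ring)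
  have hdecay := le_mul_rpow_neg_of_le_mul_inv_rpow_half (by positivity) hθ1 hβ hQ
    (f := fun τ => (volume {x | τ < u x}).toReal) (M := (volume Ω).toReal)
    (fun τ hτ => ⟨ENNReal.toReal_nonneg,
      ENNReal.toReal_mono hΩ (volume_lt_le_of_mem_Xs0 hu.1 hτ.le)⟩) hrec ht
  rw [← ENNReal.ofReal_toReal (hfin t ht.le)]
  exact ENNReal.ofReal_le_ofReal hdecay

end Solution

lemma pos_and_lt_of_one_lt_div_sub {a b : ℝ} (ha : 0 ≤ a) (h : 1 < a / (a - b)) :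
    0 < b ∧ b < a := by
  have hab : 0 < a - b := by
    by_contra hab
    linarith [div_nonpos_of_nonneg_of_nonpos ha (not_lt.mp hab)]
  rw [one_lt_div hab] at h
  constructor <;> linarith

/-- uniform local `L^p` estimate, `p ∈ [1, n/(n-2s))`, for nonnegative
weak solutions `u ∈ Y^s_0(Ω)` of `L_K u + V u = h` with `h ≥ 0`, `∫_Ω h ≤ 1`:
`‖u‖_{L^p(B_r(x₀))} ≤ C r^{n/p - (n-2s)}` with `C = C(p, λ, n, s)`. -/
theorem stmt18 (n : ℕ) (s : ℝ)
    (c : ℝ) (hc : 0 < c)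
    (lam : ℝ) (hlam : 0 < lam) :
    ∀ p : ℝ, 1 ≤ p → p < (n : ℝ) / (n - 2 * s) →
      ∃ C : ℝ, 0 < C ∧
        ∀ Lam : ℝ, lam ≤ Lam → ∀ K : En n → ℝ, IsKernel n s lam Lam c K →
        ∀ q : ℝ, (n : ℝ) / (2 * s) < q →
        ∀ V : En n → ℝ, Measurable V → (∀ x, 0 ≤ V x) → LocLq n q V →
        ∀ Ω : Set (En n), IsOpen Ω → Bornology.IsBounded Ω →
        ∀ h : En n → ℝ, MemLp h 2 (volume.restrict Ω) →
          (∀ᵐ x ∂volume.restrict Ω, 0 ≤ h x) → (∫ x in Ω, h x) ≤ 1 →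
        ∀ u ∈ Ys0 n s Ω V, (∀ᵐ x : En n ∂volume, 0 ≤ u x) →
          (∀ φ ∈ Ys0 n s Ω V,
            bilin n K u φ + ∫ x in Ω, V x * u x * φ x = ∫ x in Ω, h x * φ x) →
        ∀ (x₀ : En n) (r : ℝ), 0 < r →
          eLpNorm u (ENNReal.ofReal p) (volume.restrict (Metric.ball x₀ r)) ≤
            ENNReal.ofReal (C * r ^ ((n : ℝ) / p - ((n : ℝ) - 2 * s))) := by
  intro p hp1 hpβ
  obtain ⟨hs, hsn⟩ := pos_and_lt_of_one_lt_div_sub (Nat.cast_nonneg n) (hp1.trans_lt hpβ)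
  have hC := levelSetDecayConst_nonneg n s hlam hc
  have hβp : 0 < n / (n - 2 * s) - p := sub_pos.mpr hpβ
  refine ⟨(ballVol n + p * levelSetDecayConst n s lam c / (n / (n - 2 * s) - p)) ^ p⁻¹,
    by have := ballVol_pos n; positivity, ?_⟩
  intro Lam hLam K hK q _ V _ hV _ Ω _ hΩ h hh2 hh0 hh1 u hu hu0 hweak x₀ r hr
  exact eLpNorm_restrict_ball_le hu.1.1 hu0 (by linarith) (by linarith) hpβ hC
    (fun t ht => volume_lt_le_of_weakSolution (by linarith) hsn hK hlam hLam hc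
      hΩ.measure_lt_top.ne hV hh2 hh0 hh1 hu hu0 hweak ht) x₀ hr
end
end
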